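/- In the colored partition monoid CPar_k, for colored partition diagrams d and d', one has CPar_k · d = CPar_k · d' (Green's L-relation) if and only if: (1) the set of colored nonpropagating bottom blocks of d equals that of d', and (2) the set of bottom constituents (intersections with {1',...,k'}) of the propagating parts of d equals the set of bottom constituents of the propagating parts of d' (colors of propagating parts may differ). -/

import Mathlib

/-!
The left ideal `CPar_k · d` is cut out by the bottom data of `d`: a diagram `x` lies in it
exactly when every colored nonpropagating bottom block of `d` is one of `x`, and every bottom
block of `x` is either a colored nonpropagating bottom block of `d` or a union of bottom
constituents of propagating parts of `d`. Necessity is read off the concatenation. For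
sufficiency one builds `a` with `a · d = x`: the bottom row of `a` joins the propagating parts
of `d` as `x` prescribes, and each block of `a` carries the color of its block of `x` divided by
the colors that `d` contributes to it. Equal bottom data thus give equal left ideals. Conversely,
every diagram satisfies its own criterion, so equal left ideals make `d` and `d'` satisfy each
other's, and that forces their bottom data to agree.
-/

open Relation

/-- The cyclic group of order `r` (multiplicative). -/
abbrev Cr (r : ℕ) := Multiplicative (ZMod r)

/-- A colored `(k,l)`-partition diagram: a set-partition (equivalence relation)
of the `k` top vertices (`Sum.inl`) and `l` bottom vertices (`Sum.inr`),
together with a color from `C_r` attached to each block. -/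
structure CDiag (r k l : ℕ) where
  rel : Setoid (Fin k ⊕ Fin l)
  col : Quotient rel → Cr r

namespace CDiag

/-- Push a setoid forward along a map (equivalence relation generated by the
image relation). -/
def push {α β : Type*} (f : α → β) (s : Setoid α) : Setoid β :=
  Relation.EqvGen.setoid fun x y => ∃ a b, s.r a b ∧ x = f a ∧ y = f b

/-- Top row of the first factor stays on top; its bottom row goes to the middle. -/
def ι₁ {k l m : ℕ} : Fin k ⊕ Fin l → Fin k ⊕ (Fin l ⊕ Fin m) :=
  Sum.map id Sum.inl

/-- Top row of the second factor goes to the middle; its bottom row stays at the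
bottom. -/
def ι₂ {k l m : ℕ} : Fin l ⊕ Fin m → Fin k ⊕ (Fin l ⊕ Fin m) :=
  Sum.inr

/-- The outer (top and bottom) vertices inside the three-row concatenation. -/
def ιo {k l m : ℕ} : Fin k ⊕ Fin m → Fin k ⊕ (Fin l ⊕ Fin m) :=
  Sum.map id Sum.inr

/-- The equivalence relation on the three rows generated by stacking `d₁` on
top of `d₂`. -/
def bigRel {r k l m : ℕ} (d₁ : CDiag r k l) (d₂ : CDiag r l m) :
    Setoid (Fin k ⊕ (Fin l ⊕ Fin m)) :=
  push (ι₁ (m := m)) d₁.rel ⊔ push (ι₂ (k := k)) d₂.rel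

/-- Linear position of a vertex (top row first, then bottom row). -/
def pos {k l : ℕ} : Fin k ⊕ Fin l → ℕ :=
  Sum.elim (fun i => (i : ℕ)) fun j => k + (j : ℕ)

/-- `a` is the canonical (least-position) representative of its block in `d`. -/
def lead {r k l : ℕ} (d : CDiag r k l) (a : Fin k ⊕ Fin l) : Prop :=
  ∀ b, d.rel.r a b → pos a ≤ pos b

/-- Concatenation of colored partition diagrams (all parameters `x_i = 1`):
stack `d₁` on top of `d₂`, identify the bottom row of `d₁` with the top row of
`d₂`, restrict to the outer rows, color each resulting block by the product of
the colors of all blocks of `d₁` and `d₂` contributing to it, and discard the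
components lying entirely in the middle. -/
noncomputable def comp {r k l m : ℕ} (d₁ : CDiag r k l) (d₂ : CDiag r l m) :
    CDiag r k m where
  rel := Setoid.comap ιo (bigRel d₁ d₂)
  col := fun q =>
    (∏ᶠ (a : Fin k ⊕ Fin l)
      (_ : lead d₁ a ∧ (bigRel d₁ d₂).r (ι₁ a) (ιo q.out)),
        d₁.col (Quotient.mk d₁.rel a)) *
    (∏ᶠ (a : Fin l ⊕ Fin m)
      (_ : lead d₂ a ∧ (bigRel d₁ d₂).r (ι₂ a) (ιo q.out)),
        d₂.col (Quotient.mk d₂.rel a))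

/-- The identity diagram: each part `{i, i'}`, all colored by the identity. -/
def idDiag (r k : ℕ) : CDiag r k k :=
  ⟨Relation.EqvGen.setoid fun x y => ∃ i, x = Sum.inl i ∧ y = Sum.inr i,
    fun _ => 1⟩

/-- A block is propagating if it meets both the top and the bottom row. -/
def Propagating {r k l : ℕ} (d : CDiag r k l) (q : Quotient d.rel) : Prop :=
  (∃ i : Fin k, Quotient.mk d.rel (Sum.inl i) = q) ∧
  (∃ j : Fin l, Quotient.mk d.rel (Sum.inr j) = q)

/-- The rank of a colored partition diagram: its number of propagating parts. -/
noncomputable def rn {r k l : ℕ} (d : CDiag r k l) : ℕ :=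
  Nat.card {q : Quotient d.rel // Propagating d q}

end CDiag

open CDiag

/-- The colored nonpropagating bottom blocks of a colored `(k,k)`-partition
diagram: blocks contained in the bottom row, together with their colors. -/
def downBlocks {r k : ℕ} (d : CDiag r k k) : Set (Set (Fin k) × Cr r) :=
  { p | ∃ q : Quotient d.rel,
      (∀ i : Fin k, Quotient.mk d.rel (Sum.inl i) ≠ q) ∧
      (∃ j : Fin k, Quotient.mk d.rel (Sum.inr j) = q) ∧
      p.1 = {j : Fin k | Quotient.mk d.rel (Sum.inr j) = q} ∧
      p.2 = d.col q }

/-- The bottom constituents (intersections with the bottom row) of the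
propagating parts of a colored `(k,k)`-partition diagram. -/
def propBottoms {r k : ℕ} (d : CDiag r k k) : Set (Set (Fin k)) :=
  { s | ∃ q : Quotient d.rel, Propagating d q ∧
      s = {j : Fin k | Quotient.mk d.rel (Sum.inr j) = q} }

namespace CDiag

variable {r k l m : ℕ}

lemma pos_injective : Function.Injective (pos (k := k) (l := l)) := by
  rintro (i | j) (i' | j') h <;> simp only [pos, Sum.elim_inl, Sum.elim_inr] at h
  · exact congrArg Sum.inl (Fin.ext h)
  · exact absurd h (by omega)
  · exact absurd h (by omega)
  · exact congrArg Sum.inr (Fin.ext (by omega))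

lemma exists_lead (d : CDiag r k l) (v : Fin k ⊕ Fin l) : ∃ p, lead d p ∧ d.rel.r p v := by
  classical
  obtain ⟨p, hp, hmin⟩ := Finset.exists_min_image
    (Finset.univ.filter fun p => d.rel.r p v) pos ⟨v, by simp⟩
  simp only [Finset.mem_filter, Finset.mem_univ, true_and] at hp hmin
  exact ⟨p, fun q hq => hmin q (d.rel.trans' (d.rel.symm' hq) hp), hp⟩

lemma eq_of_lead_of_lead {d : CDiag r k l} {p q : Fin k ⊕ Fin l} (hp : lead d p)
    (hq : lead d q) (h : d.rel.r p q) : p = q :=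
  pos_injective (le_antisymm (hp q h) (hq p (d.rel.symm' h)))

lemma ι₂_inl (a : Fin l) : ι₂ (k := k) (m := m) (Sum.inl a) = Sum.inr (Sum.inl a) := rfl

lemma ι₂_inr (j : Fin m) : ι₂ (k := k) (l := l) (Sum.inr j) = Sum.inr (Sum.inr j) := rfl

lemma ιo_inr (j : Fin m) : ιo (k := k) (l := l) (Sum.inr j) = Sum.inr (Sum.inr j) := rfl

lemma push_le {α β : Type*} {f : α → β} {s : Setoid α} {t : Setoid β}
    (h : ∀ p q, s.r p q → t.r (f p) (f q)) : push f s ≤ t :=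
  Setoid.eqvGen_le (by rintro _ _ ⟨p, q, hpq, rfl, rfl⟩; exact h p q hpq)

lemma bigRel_of_left (d₁ : CDiag r k l) (d₂ : CDiag r l m) {p q : Fin k ⊕ Fin l}
    (h : d₁.rel.r p q) : (bigRel d₁ d₂).r (ι₁ p) (ι₁ q) :=
  Setoid.le_def.mp le_sup_left (EqvGen.rel _ _ ⟨p, q, h, rfl, rfl⟩)

lemma bigRel_of_right (d₁ : CDiag r k l) (d₂ : CDiag r l m) {p q : Fin l ⊕ Fin m}
    (h : d₂.rel.r p q) : (bigRel d₁ d₂).r (ι₂ p) (ι₂ q) :=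
  Setoid.le_def.mp le_sup_right (EqvGen.rel _ _ ⟨p, q, h, rfl, rfl⟩)

lemma bigRel_le_ker {β : Type*} (d₁ : CDiag r k l) (d₂ : CDiag r l m)
    {Φ : Fin k ⊕ (Fin l ⊕ Fin m) → β}
    (h₁ : ∀ p q, d₁.rel.r p q → Φ (ι₁ p) = Φ (ι₁ q))
    (h₂ : ∀ p q, d₂.rel.r p q → Φ (ι₂ p) = Φ (ι₂ q)) :
    bigRel d₁ d₂ ≤ Setoid.ker Φ :=
  sup_le (push_le h₁) (push_le h₂)

lemma bigRel_ι₂_iff_of_forall_not_rel_inl (d₁ : CDiag r k l) {d₂ : CDiag r l m}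
    {v : Fin l ⊕ Fin m} (hv : ∀ a, ¬ d₂.rel.r (Sum.inl a) v)
    (z : Fin k ⊕ (Fin l ⊕ Fin m)) :
    (bigRel d₁ d₂).r z (ι₂ v) ↔ ∃ p, d₂.rel.r p v ∧ z = ι₂ p := by
  refine ⟨fun h => ?_, fun ⟨p, hp, hz⟩ => hz ▸ bigRel_of_right d₁ d₂ hp⟩
  have hle := bigRel_le_ker d₁ d₂ (Φ := fun z => ∃ p, d₂.rel.r p v ∧ z = ι₂ p) ?_ ?_
  · exact (Setoid.ker_def.mp (hle h)).mpr ⟨v, d₂.rel.refl' v, rfl⟩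
  · have hout : ∀ p : Fin k ⊕ Fin l, ¬ ∃ p', d₂.rel.r p' v ∧ ι₁ p = ι₂ p' := by
      rintro (i | a) ⟨p', hp', he⟩
      · simp [ι₁, ι₂] at he
      · obtain rfl : p' = Sum.inl a := by simpa [ι₁, ι₂, eq_comm] using he
        exact hv a hp'
    exact fun p q _ => propext ⟨fun h => absurd h (hout p), fun h => absurd h (hout q)⟩
  · intro p q hpq
    simp only [ι₂, Sum.inr.injEq, exists_eq_right']
    exact propext ⟨d₂.rel.trans' (d₂.rel.symm' hpq), d₂.rel.trans' hpq⟩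

noncomputable def colorProd {β : Type*} (d : CDiag r k l) (f : Fin k ⊕ Fin l → β)
    (R : Setoid β) (v : β) : Cr r :=
  ∏ᶠ (p) (_ : lead d p ∧ R.r (f p) v), d.col (Quotient.mk d.rel p)

section ColorProd

variable {β : Type*} {d : CDiag r k l} {f : Fin k ⊕ Fin l → β} {R : Setoid β}

lemma colorProd_congr {v w : β} (h : R.r v w) : colorProd d f R v = colorProd d f R w := by
  have hcond : ∀ p, lead d p ∧ R.r (f p) v ↔ lead d p ∧ R.r (f p) w := fun p =>
    and_congr_right fun _ => ⟨fun hp => R.trans' hp h, fun hp => R.trans' hp (R.symm' h)⟩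
  simp only [colorProd, hcond]

lemma colorProd_eq_one {v : β} (h : ∀ p, ¬ R.r (f p) v) : colorProd d f R v = 1 := by
  simp only [colorProd, h, and_false, finprod_false, finprod_one]

lemma colorProd_eq_col (hf : ∀ p q, d.rel.r p q → R.r (f p) (f q)) {v : β}
    {p₀ : Fin k ⊕ Fin l} (hp₀ : R.r (f p₀) v)
    (hblock : ∀ p, R.r (f p) v → d.rel.r p p₀) :
    colorProd d f R v = d.col (Quotient.mk d.rel p₀) := by
  obtain ⟨p', hlead, hp'⟩ := exists_lead d p₀
  have hcond : ∀ p, lead d p ∧ R.r (f p) v ↔ p = p' := fun p =>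
    ⟨fun ⟨hp, hpv⟩ =>
      eq_of_lead_of_lead hp hlead (d.rel.trans' (hblock p hpv) (d.rel.symm' hp')),
      fun h => h ▸ ⟨hlead, R.trans' (hf _ _ hp') hp₀⟩⟩
  simp only [colorProd, hcond, finprod_cond_eq_left]
  exact congrArg d.col (Quotient.sound hp')

end ColorProd

lemma ext' {d₁ d₂ : CDiag r k l} (hrel : d₁.rel = d₂.rel)
    (hcol : ∀ w, d₁.col (Quotient.mk d₁.rel w) = d₂.col (Quotient.mk d₂.rel w)) :
    d₁ = d₂ := by
  obtain ⟨R, c₁⟩ := d₁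
  obtain ⟨_, c₂⟩ := d₂
  subst hrel
  congr
  funext q
  induction q using Quotient.ind
  exact hcol _

lemma comp_rel {d₁ : CDiag r k l} {d₂ : CDiag r l m} {u w : Fin k ⊕ Fin m} :
    (comp d₁ d₂).rel.r u w ↔ (bigRel d₁ d₂).r (ιo u) (ιo w) := Iff.rfl

lemma comp_col_mk (d₁ : CDiag r k l) (d₂ : CDiag r l m) (w : Fin k ⊕ Fin m) :
    (comp d₁ d₂).col (Quotient.mk _ w) =
      colorProd d₁ ι₁ (bigRel d₁ d₂) (ιo w) *
        colorProd d₂ ι₂ (bigRel d₁ d₂) (ιo w) := by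
  have hout : (bigRel d₁ d₂).r (ιo (Quotient.mk (comp d₁ d₂).rel w).out) (ιo w) :=
    comp_rel.mp (Quotient.mk_out (s := (comp d₁ d₂).rel) w)
  exact congrArg₂ (· * ·) (colorProd_congr hout) (colorProd_congr hout)

def bottomBlock (d : CDiag r k l) (j : Fin l) : Set (Fin l) :=
  {j' | d.rel.r (Sum.inr j') (Sum.inr j)}

lemma mem_bottomBlock_self (d : CDiag r k l) (j : Fin l) : j ∈ bottomBlock d j :=
  d.rel.refl' _

lemma setOf_mk_inr_eq (d : CDiag r k l) (j : Fin l) :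
    {j' | Quotient.mk d.rel (Sum.inr j') = Quotient.mk d.rel (Sum.inr j)} = bottomBlock d j :=
  Set.ext fun _ => Quotient.eq

lemma bottomBlock_eq_of_mem {d : CDiag r k l} {j j' : Fin l} (h : j ∈ bottomBlock d j') :
    bottomBlock d j = bottomBlock d j' :=
  Set.ext fun _ => ⟨fun h' => d.rel.trans' h' h, fun h' => d.rel.trans' h' (d.rel.symm' h)⟩

lemma bottomBlock_subset_comp (d₁ : CDiag r k l) (d₂ : CDiag r l m) (j : Fin m) :
    bottomBlock d₂ j ⊆ bottomBlock (comp d₁ d₂) j :=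
  fun _ h => bigRel_of_right d₁ d₂ h

section NotPropagating

variable (d₁ : CDiag r k l) {d₂ : CDiag r l m} {j : Fin m}

lemma comp_rel_inr_iff_of_forall_not_rel (hj : ∀ a, ¬ d₂.rel.r (Sum.inl a) (Sum.inr j))
    (w : Fin k ⊕ Fin m) :
    (comp d₁ d₂).rel.r w (Sum.inr j) ↔
      ∃ j', w = Sum.inr j' ∧ d₂.rel.r (Sum.inr j') (Sum.inr j) := by
  rw [comp_rel, ιo_inr, ← ι₂_inr, bigRel_ι₂_iff_of_forall_not_rel_inl d₁ hj]
  constructor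
  · rintro ⟨p, hp, he⟩
    rcases w with i | j' <;> rcases p with a | b <;> simp [ι₂, ιo] at he
    exact ⟨j', rfl, he ▸ hp⟩
  · rintro ⟨j', rfl, h⟩
    exact ⟨Sum.inr j', h, rfl⟩

lemma comp_not_rel_inl_inr (hj : ∀ a, ¬ d₂.rel.r (Sum.inl a) (Sum.inr j)) (i : Fin k) :
    ¬ (comp d₁ d₂).rel.r (Sum.inl i) (Sum.inr j) := fun h => by
  obtain ⟨_, he, _⟩ := (comp_rel_inr_iff_of_forall_not_rel d₁ hj _).mp h
  exact Sum.inl_ne_inr he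

lemma bottomBlock_comp_of_forall_not_rel (hj : ∀ a, ¬ d₂.rel.r (Sum.inl a) (Sum.inr j)) :
    bottomBlock (comp d₁ d₂) j = bottomBlock d₂ j :=
  Set.ext fun j' => (comp_rel_inr_iff_of_forall_not_rel d₁ hj _).trans
    ⟨fun ⟨_, he, h⟩ => Sum.inr_injective he ▸ h, fun h => ⟨j', rfl, h⟩⟩

lemma comp_col_inr_of_forall_not_rel (hj : ∀ a, ¬ d₂.rel.r (Sum.inl a) (Sum.inr j)) :
    (comp d₁ d₂).col (Quotient.mk _ (Sum.inr j)) =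
      d₂.col (Quotient.mk d₂.rel (Sum.inr j)) := by
  have hcomp := bigRel_ι₂_iff_of_forall_not_rel_inl d₁ hj
  rw [comp_col_mk, ιo_inr, ← ι₂_inr, colorProd_eq_one, one_mul]
  · refine colorProd_eq_col (fun _ _ => bigRel_of_right d₁ d₂) ((bigRel d₁ d₂).refl' _)
      fun p hp => ?_
    obtain ⟨p', hp', he⟩ := (hcomp _).mp hp
    exact Sum.inr_injective he ▸ hp'
  · intro p hp
    obtain ⟨p', hp', he⟩ := (hcomp _).mp hp
    rcases p with i | a <;> rcases p' with b | j' <;> simp [ι₁, ι₂] at he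
    exact hj a (he ▸ hp')

end NotPropagating

section BottomData

variable {d : CDiag r k k}

lemma mem_downBlocks_iff {p : Set (Fin k) × Cr r} :
    p ∈ downBlocks d ↔ ∃ j, (∀ i, ¬ d.rel.r (Sum.inl i) (Sum.inr j)) ∧
      p = (bottomBlock d j, d.col (Quotient.mk _ (Sum.inr j))) := by
  constructor
  · rintro ⟨_, htop, ⟨j, rfl⟩, hS, hc⟩
    exact ⟨j, fun i h => htop i (Quotient.sound h),
      Prod.ext (hS.trans (setOf_mk_inr_eq d j)) hc⟩
  · rintro ⟨j, hj, rfl⟩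
    exact ⟨_, fun i h => hj i (Quotient.exact h), ⟨j, rfl⟩, (setOf_mk_inr_eq d j).symm, rfl⟩

lemma mem_downBlocks_iff_of_mem {S : Set (Fin k)} {c : Cr r} {j : Fin k} (hj : j ∈ S) :
    (S, c) ∈ downBlocks d ↔ (∀ i, ¬ d.rel.r (Sum.inl i) (Sum.inr j)) ∧
      S = bottomBlock d j ∧ c = d.col (Quotient.mk _ (Sum.inr j)) := by
  rw [mem_downBlocks_iff]
  constructor
  · rintro ⟨j₀, hj₀, hS⟩
    obtain ⟨rfl, rfl⟩ := Prod.ext_iff.mp hS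
    refine ⟨fun i h => hj₀ i (d.rel.trans' h hj), (bottomBlock_eq_of_mem hj).symm, ?_⟩
    exact congrArg d.col (Quotient.sound (d.rel.symm' hj))
  · rintro ⟨hnp, rfl, rfl⟩
    exact ⟨j, hnp, rfl⟩

lemma mem_propBottoms_iff_of_mem {S : Set (Fin k)} {j : Fin k} (hj : j ∈ S) :
    S ∈ propBottoms d ↔ (∃ i, d.rel.r (Sum.inl i) (Sum.inr j)) ∧ S = bottomBlock d j := by
  constructor
  · rintro ⟨_, ⟨⟨i, hi⟩, ⟨j₀, rfl⟩⟩, rfl⟩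
    rw [setOf_mk_inr_eq] at hj ⊢
    exact ⟨⟨i, d.rel.trans' (Quotient.exact hi) (d.rel.symm' hj)⟩,
      (bottomBlock_eq_of_mem hj).symm⟩
  · rintro ⟨⟨i, hi⟩, rfl⟩
    exact ⟨_, ⟨⟨i, Quotient.sound hi⟩, ⟨j, rfl⟩⟩, (setOf_mk_inr_eq d j).symm⟩

end BottomData

def BottomsBuiltFrom (x : CDiag r k k) (DB : Set (Set (Fin k) × Cr r))
    (PB : Set (Set (Fin k))) : Prop :=
  DB ⊆ downBlocks x ∧ ∀ j, (bottomBlock x j, x.col (Quotient.mk _ (Sum.inr j))) ∈ DB ∨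
    ∀ j' ∈ bottomBlock x j, ∃ T ∈ PB, j' ∈ T ∧ T ⊆ bottomBlock x j

lemma BottomsBuiltFrom.forall_not_rel_of_mem {x : CDiag r k k} {DB : Set (Set (Fin k) × Cr r)}
    {PB : Set (Set (Fin k))} {j : Fin k} (h : BottomsBuiltFrom x DB PB)
    (hj : (bottomBlock x j, x.col (Quotient.mk _ (Sum.inr j))) ∈ DB) (i : Fin k) :
    ¬ x.rel.r (Sum.inl i) (Sum.inr j) :=
  ((mem_downBlocks_iff_of_mem (mem_bottomBlock_self x j)).mp (h.1 hj)).1 i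

lemma bottomsBuiltFrom_self (d : CDiag r k k) :
    BottomsBuiltFrom d (downBlocks d) (propBottoms d) := by
  refine ⟨subset_rfl, fun j => ?_⟩
  by_cases hj : ∃ i, d.rel.r (Sum.inl i) (Sum.inr j)
  · refine Or.inr fun j' hj' => ⟨bottomBlock d j, ?_, hj', subset_rfl⟩
    exact (mem_propBottoms_iff_of_mem (mem_bottomBlock_self d j)).mpr ⟨hj, rfl⟩
  · push Not at hj
    exact Or.inl (mem_downBlocks_iff.mpr ⟨j, hj, rfl⟩)

lemma bottomsBuiltFrom_comp (a d : CDiag r k k) :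
    BottomsBuiltFrom (comp a d) (downBlocks d) (propBottoms d) := by
  have hsame : ∀ j, (∀ i, ¬ d.rel.r (Sum.inl i) (Sum.inr j)) →
      (bottomBlock (comp a d) j, (comp a d).col (Quotient.mk _ (Sum.inr j))) =
        (bottomBlock d j, d.col (Quotient.mk _ (Sum.inr j))) := fun j hj => by
    rw [bottomBlock_comp_of_forall_not_rel a hj, comp_col_inr_of_forall_not_rel a hj]
  refine ⟨fun p hp => ?_, fun j => ?_⟩
  · obtain ⟨j, hj, rfl⟩ := mem_downBlocks_iff.mp hp
    exact mem_downBlocks_iff.mpr ⟨j, comp_not_rel_inl_inr a hj, (hsame j hj).symm⟩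
  by_cases hj : ∃ i, d.rel.r (Sum.inl i) (Sum.inr j)
  · refine Or.inr fun j' hj' => ?_
    have hj'prop : ∃ i, d.rel.r (Sum.inl i) (Sum.inr j') := by
      by_contra! hnp
      obtain ⟨i, hi⟩ := hj
      have hjj' : j ∈ bottomBlock (comp a d) j' := (comp a d).rel.symm' hj'
      rw [bottomBlock_comp_of_forall_not_rel a hnp] at hjj'
      exact hnp i (d.rel.trans' hi hjj')
    refine ⟨bottomBlock d j', ?_, mem_bottomBlock_self d j', fun j'' hj'' => ?_⟩
    · exact (mem_propBottoms_iff_of_mem (mem_bottomBlock_self d j')).mpr ⟨hj'prop, rfl⟩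
    · exact (comp a d).rel.trans' (bottomBlock_subset_comp a d j' hj'') hj'
  · push Not at hj
    rw [hsame j hj]
    exact Or.inl (mem_downBlocks_iff.mpr ⟨j, hj, rfl⟩)

lemma propBottoms_subset_of_bottomsBuiltFrom {d d' : CDiag r k k}
    (h : BottomsBuiltFrom d (downBlocks d') (propBottoms d'))
    (h' : BottomsBuiltFrom d' (downBlocks d) (propBottoms d)) :
    propBottoms d ⊆ propBottoms d' := by
  intro S hS
  obtain ⟨j, hjS⟩ : ∃ j, j ∈ S := by
    obtain ⟨_, ⟨_, ⟨j, hj⟩⟩, rfl⟩ := hS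
    exact ⟨j, hj⟩
  obtain ⟨⟨i, hi⟩, rfl⟩ := (mem_propBottoms_iff_of_mem hjS).mp hS
  rcases h.2 j with hdown | hunion
  · exact absurd hi (h.forall_not_rel_of_mem hdown i)
  obtain ⟨T, hT, hjT, hTS⟩ := hunion j (mem_bottomBlock_self d j)
  obtain ⟨⟨i', hi'⟩, rfl⟩ := (mem_propBottoms_iff_of_mem hjT).mp hT
  rcases h'.2 j with hdown' | hunion'
  · exact absurd hi' (h'.forall_not_rel_of_mem hdown' i')
  obtain ⟨U, hU, hjU, hUT⟩ := hunion' j (mem_bottomBlock_self d' j)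
  obtain ⟨-, rfl⟩ := (mem_propBottoms_iff_of_mem hjU).mp hU
  rwa [← hTS.antisymm hUT]

lemma bottomData_eq_of_bottomsBuiltFrom {d d' : CDiag r k k}
    (h : BottomsBuiltFrom d (downBlocks d') (propBottoms d'))
    (h' : BottomsBuiltFrom d' (downBlocks d) (propBottoms d)) :
    downBlocks d = downBlocks d' ∧ propBottoms d = propBottoms d' :=
  ⟨h'.1.antisymm h.1, (propBottoms_subset_of_bottomsBuiltFrom h h').antisymm
    (propBottoms_subset_of_bottomsBuiltFrom h' h)⟩

/-- The block of `x` that a vertex of the stack of `lift d x` over `d` has to join; a middle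
vertex whose block in `d` avoids the bottom row is sent to that block of `d` instead, since it
ends up in a discarded middle component. -/
noncomputable def label (d x : CDiag r k k) :
    Fin k ⊕ (Fin k ⊕ Fin k) → Quotient x.rel ⊕ Quotient d.rel
  | Sum.inl i => Sum.inl (Quotient.mk _ (Sum.inl i))
  | Sum.inr (Sum.inl j) =>
      open Classical in
      if h : ∃ j', d.rel.r (Sum.inl j) (Sum.inr j') then
        Sum.inl (Quotient.mk _ (Sum.inr h.choose))
      else Sum.inr (Quotient.mk _ (Sum.inl j))
  | Sum.inr (Sum.inr j) => Sum.inl (Quotient.mk _ (Sum.inr j))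

noncomputable def liftRel (d x : CDiag r k k) : Setoid (Fin k ⊕ Fin k) :=
  Setoid.ker fun v => label d x (ι₁ v)

/-- Each block of `x` is met by at most one block of `lift d x`, whose color is chosen to cancel
the colors that `d` contributes to it. -/
noncomputable def lift (d x : CDiag r k k) : CDiag r k k where
  rel := liftRel d x
  col Q := Sum.elim x.col 1 (label d x (ι₁ Q.out)) *
    (colorProd d ι₂ (bigRel ⟨liftRel d x, 1⟩ d) (ι₁ Q.out))⁻¹

section Lift

variable {d x : CDiag r k k}

lemma label_ιo (w : Fin k ⊕ Fin k) : label d x (ιo w) = Sum.inl (Quotient.mk _ w) := by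
  cases w <;> rfl

lemma label_ι₂_of_forall_not_rel {v : Fin k ⊕ Fin k} (h : ∀ j, ¬ d.rel.r v (Sum.inr j)) :
    label d x (ι₂ v) = Sum.inr (Quotient.mk _ v) := by
  rcases v with j₀ | j₀
  · rw [ι₂_inl, label, dif_neg (not_exists.mpr h)]
  · exact absurd (d.rel.refl' _) (h j₀)

lemma BottomsBuiltFrom.rel_inr_of_rel (hQ : BottomsBuiltFrom x (downBlocks d) (propBottoms d))
    {j j' : Fin k} (h : d.rel.r (Sum.inr j) (Sum.inr j')) :
    x.rel.r (Sum.inr j) (Sum.inr j') := by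
  rcases hQ.2 j with hdown | hunion
  · obtain ⟨-, hblock, -⟩ := (mem_downBlocks_iff_of_mem (mem_bottomBlock_self x j)).mp hdown
    have hj' : j' ∈ bottomBlock x j := hblock ▸ d.rel.symm' h
    exact x.rel.symm' hj'
  · obtain ⟨T, hT, hjT, hTx⟩ := hunion j (mem_bottomBlock_self x j)
    obtain ⟨-, rfl⟩ := (mem_propBottoms_iff_of_mem hjT).mp hT
    exact x.rel.symm' (hTx (d.rel.symm' h))

lemma label_ι₂_of_rel (hQ : BottomsBuiltFrom x (downBlocks d) (propBottoms d))
    {v : Fin k ⊕ Fin k} {j : Fin k} (h : d.rel.r v (Sum.inr j)) :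
    label d x (ι₂ v) = Sum.inl (Quotient.mk _ (Sum.inr j)) := by
  rcases v with j₀ | j₀
  · have hex : ∃ j', d.rel.r (Sum.inl j₀) (Sum.inr j') := ⟨j, h⟩
    rw [ι₂_inl, label, dif_pos hex]
    exact congrArg Sum.inl (Quotient.sound
      (hQ.rel_inr_of_rel (d.rel.trans' (d.rel.symm' hex.choose_spec) h)))
  · exact congrArg Sum.inl (Quotient.sound (hQ.rel_inr_of_rel h))

lemma bigRel_lift_le_ker_label (hQ : BottomsBuiltFrom x (downBlocks d) (propBottoms d)) :
    bigRel (lift d x) d ≤ Setoid.ker (label d x) := by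
  refine bigRel_le_ker _ d (fun _ _ h => h) fun p q hpq => ?_
  by_cases hp : ∃ j, d.rel.r p (Sum.inr j)
  · obtain ⟨j, hj⟩ := hp
    rw [label_ι₂_of_rel hQ hj, label_ι₂_of_rel hQ (d.rel.trans' (d.rel.symm' hpq) hj)]
  · push Not at hp
    rw [label_ι₂_of_forall_not_rel hp,
      label_ι₂_of_forall_not_rel fun j hq => hp j (d.rel.trans' hpq hq)]
    exact congrArg Sum.inr (Quotient.sound hpq)

lemma rel_of_rel_lift_comp (hQ : BottomsBuiltFrom x (downBlocks d) (propBottoms d))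
    {u w : Fin k ⊕ Fin k} (h : (comp (lift d x) d).rel.r u w) : x.rel.r u w := by
  have hlabel := Setoid.ker_def.mp (bigRel_lift_le_ker_label hQ h)
  rw [label_ιo, label_ιo] at hlabel
  exact Quotient.exact (Sum.inl_injective hlabel)

lemma exists_lift_vertex_or_mem_downBlocks
    (hQ : BottomsBuiltFrom x (downBlocks d) (propBottoms d)) (w : Fin k ⊕ Fin k) :
    (∃ p, label d x (ι₁ p) = Sum.inl (Quotient.mk _ w) ∧
      (bigRel (lift d x) d).r (ι₁ p) (ιo w)) ∨
    ∃ j, w = Sum.inr j ∧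
      (bottomBlock x j, x.col (Quotient.mk _ (Sum.inr j))) ∈ downBlocks d := by
  rcases w with i | j
  · exact Or.inl ⟨Sum.inl i, rfl, (bigRel _ _).refl' _⟩
  rcases hQ.2 j with hdown | hunion
  · exact Or.inr ⟨j, rfl, hdown⟩
  obtain ⟨T, hT, hjT, -⟩ := hunion j (mem_bottomBlock_self x j)
  obtain ⟨⟨i, hi⟩, -⟩ := (mem_propBottoms_iff_of_mem hjT).mp hT
  exact Or.inl ⟨Sum.inr i, label_ι₂_of_rel hQ hi, bigRel_of_right _ d hi⟩

lemma rel_lift_comp_of_mem_downBlocks (hQ : BottomsBuiltFrom x (downBlocks d) (propBottoms d))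
    {w : Fin k ⊕ Fin k} {j : Fin k}
    (hj : (bottomBlock x j, x.col (Quotient.mk _ (Sum.inr j))) ∈ downBlocks d)
    (h : x.rel.r w (Sum.inr j)) : (comp (lift d x) d).rel.r w (Sum.inr j) := by
  obtain ⟨-, hblock, -⟩ := (mem_downBlocks_iff_of_mem (mem_bottomBlock_self x j)).mp hj
  rcases w with i | j'
  · exact absurd h (hQ.forall_not_rel_of_mem hj i)
  · have hj' : j' ∈ bottomBlock d j := hblock ▸ h
    exact bigRel_of_right _ d hj'

lemma rel_lift_comp_of_rel (hQ : BottomsBuiltFrom x (downBlocks d) (propBottoms d))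
    {u w : Fin k ⊕ Fin k} (h : x.rel.r u w) : (comp (lift d x) d).rel.r u w := by
  rcases exists_lift_vertex_or_mem_downBlocks hQ w with ⟨p, hp, hpw⟩ | ⟨j, rfl, hj⟩
  · rcases exists_lift_vertex_or_mem_downBlocks hQ u with ⟨q, hq, hqu⟩ | ⟨j, rfl, hj⟩
    · have hqp : (lift d x).rel.r q p :=
        Setoid.ker_def.mpr (hq.trans (congrArg Sum.inl (Quotient.sound h)) |>.trans hp.symm)
      exact (bigRel _ _).trans' ((bigRel _ _).symm' hqu)
        ((bigRel _ _).trans' (bigRel_of_left _ d hqp) hpw)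
    · exact (comp _ d).rel.symm' (rel_lift_comp_of_mem_downBlocks hQ hj (x.rel.symm' h))
  · exact rel_lift_comp_of_mem_downBlocks hQ hj h

lemma lift_comp_rel (hQ : BottomsBuiltFrom x (downBlocks d) (propBottoms d)) :
    (comp (lift d x) d).rel = x.rel :=
  Setoid.ext fun _ _ => ⟨rel_of_rel_lift_comp hQ, rel_lift_comp_of_rel hQ⟩

lemma lift_comp_col (hQ : BottomsBuiltFrom x (downBlocks d) (propBottoms d))
    (w : Fin k ⊕ Fin k) :
    (comp (lift d x) d).col (Quotient.mk _ w) = x.col (Quotient.mk _ w) := by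
  rcases exists_lift_vertex_or_mem_downBlocks hQ w with ⟨p, hp, hpw⟩ | ⟨j, rfl, hj⟩
  · have hblock : ∀ q, (bigRel (lift d x) d).r (ι₁ q) (ιo w) → (lift d x).rel.r q p :=
      fun q hq => Setoid.ker_def.mpr <|
        (Setoid.ker_def.mp (bigRel_lift_le_ker_label hQ hq)).trans ((label_ιo w).trans hp.symm)
    set o := (Quotient.mk (lift d x).rel p).out
    have hop : (lift d x).rel.r o p := Quotient.mk_out (s := (lift d x).rel) p
    have how : (bigRel (lift d x) d).r (ι₁ o) (ιo w) :=
      (bigRel _ _).trans' (bigRel_of_left _ d hop) hpw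
    rw [comp_col_mk, colorProd_eq_col (fun _ _ => bigRel_of_left _ d) hpw hblock]
    change Sum.elim x.col 1 (label d x (ι₁ o)) *
      (colorProd d ι₂ (bigRel (lift d x) d) (ι₁ o))⁻¹ * _ = _
    rw [Setoid.ker_def.mp hop, hp, colorProd_congr how, Sum.elim_inl, inv_mul_cancel_right]
  · obtain ⟨hnp, -, hcol⟩ := (mem_downBlocks_iff_of_mem (mem_bottomBlock_self x j)).mp hj
    rw [comp_col_inr_of_forall_not_rel _ hnp, hcol]

lemma exists_comp_eq_of_bottomsBuiltFrom
    (hQ : BottomsBuiltFrom x (downBlocks d) (propBottoms d)) : ∃ a, comp a d = x :=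
  ⟨lift d x, ext' (lift_comp_rel hQ) (lift_comp_col hQ)⟩

end Lift

lemma setOf_exists_comp_eq (d : CDiag r k k) :
    {x : CDiag r k k | ∃ a, comp a d = x} =
      {x | BottomsBuiltFrom x (downBlocks d) (propBottoms d)} :=
  Set.ext fun _ => ⟨fun ⟨a, ha⟩ => ha ▸ bottomsBuiltFrom_comp a d,
    exists_comp_eq_of_bottomsBuiltFrom⟩

end CDiag

/-- Green's L-relation on the colored partition monoid `CPar_k`:
`CPar_k·d = CPar_k·d'` if and only if `d` and `d'` have the same colored
nonpropagating bottom blocks and the same set of bottom constituents of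
propagating parts. -/
theorem coloredPartitionMonoid_L_iff (r k : ℕ) (d d' : CDiag r k k) :
    {x : CDiag r k k | ∃ a, comp a d = x}
      = {x : CDiag r k k | ∃ a, comp a d' = x}
    ↔ (downBlocks d = downBlocks d' ∧ propBottoms d = propBottoms d') := by
  rw [setOf_exists_comp_eq, setOf_exists_comp_eq]
  constructor
  · intro h
    exact bottomData_eq_of_bottomsBuiltFrom ((Set.ext_iff.mp h d).mp (bottomsBuiltFrom_self d))
      ((Set.ext_iff.mp h d').mpr (bottomsBuiltFrom_self d'))
  · rintro ⟨hdown, hprop⟩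
    rw [hdown, hprop]
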